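/- arXiv:2407.17828 — 3 statements merged into one kernel-verified Lean document; each statement's English description precedes it below -/
import Mathlib

section
/- Let (E,d) be a metric space, T > 0, p ≥ 1, and let X : [0,T] → E be a continuous path of finite p-variation. Then there exist a continuous nondecreasing surjection φ : [0,T] → [0,T] and a continuous path X̃ : [0,T] → E such that X(t) = X̃(φ(t)) for all t ∈ [0,T], and X̃ has linear p-variation control: ‖X̃‖_{p-var;[0,t]}^p = (t/T)·‖X‖_{p-var;[0,T]}^p for all t ∈ [0,T]. (X̃ is called the Hölder-control reparameterisation of X.) -/
/-!
Write `ω(s, t) = ‖X‖_{p-var;[s,t]}^p` and take `φ(t) = T · ω(0, t) / ω(0, T)`.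

The function `t ↦ ω(0, t)` is continuous. From the left this holds because partition sums depend
continuously on the partition points. From the right, `‖X‖_{p-var}` satisfies the triangle
inequality (Minkowski), so it suffices that `ω(t, s) → 0` as `s ↓ t`. If that limit `L` were
positive, then for `s` close to `t` a partition of `[t, s]` would gain almost nothing on its
first step `[t, v]` and at most `ω(t, s) - L` on `[v, s]`, which is absurd.

By superadditivity, `X` is constant on the level sets of `φ`. The map `φ` is a quotient map of
the compact interval, so `X = X̃ ∘ φ` for a continuous `X̃`. Since `p`-variation is invariant
under monotone surjective reparametrisation,
`‖X̃‖_{p-var;[0,φ(s)]}^p = ω(0, s) = (φ(s) / T) · ω(0, T)`.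
-/

open Set Filter
open scoped ENNReal NNReal Topology

/-- The `p`-variation of a path `f : ℝ → E` on the interval `[a, b]`. -/
noncomputable def pVar {E : Type*} [PseudoEMetricSpace E] (p : ℝ) (f : ℝ → E) (a b : ℝ) :
    ℝ≥0∞ :=
  ⨆ (n : ℕ) (t : Fin (n + 1) → ℝ) (_ : Monotone t) (_ : t 0 = a) (_ : t (Fin.last n) = b),
    (∑ i : Fin n, edist (f (t i.castSucc)) (f (t i.succ)) ^ p) ^ (1 / p)

lemma IsCompact.continuousOn_of_comp {α β γ : Type*} [TopologicalSpace α] [TopologicalSpace β]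
    [T2Space β] [TopologicalSpace γ] {φ : α → β} {g : β → γ} {K : Set α} (hK : IsCompact K)
    (hφ : ContinuousOn φ K) (hg : ContinuousOn (g ∘ φ) K) : ContinuousOn g (φ '' K) := by
  have : CompactSpace K := isCompact_iff_compactSpace.1 hK
  have hq : Topology.IsQuotientMap ((mapsTo_image φ K).restrict φ K (φ '' K)) :=
    .of_surjective_continuous (surjective_mapsTo_image_restrict φ K) (hφ.mapsToRestrict _)
  rw [continuousOn_iff_continuous_domRestrict, hq.continuous_iff]
  exact continuousOn_iff_continuous_domRestrict.1 hg

lemma IsCompact.exists_continuousOn_eqOn_comp {α β γ : Type*} [TopologicalSpace α] [Nonempty α]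
    [TopologicalSpace β] [T2Space β] [TopologicalSpace γ] {φ : α → β} {f : α → γ} {K : Set α}
    (hK : IsCompact K) (hφ : ContinuousOn φ K) (hf : ContinuousOn f K)
    (hfib : ∀ s ∈ K, ∀ t ∈ K, φ s = φ t → f s = f t) :
    ∃ g : β → γ, ContinuousOn g (φ '' K) ∧ EqOn f (g ∘ φ) K := by
  have hfg : EqOn f ((f ∘ Function.invFunOn φ K) ∘ φ) K := fun t ht =>
    have hinv := Function.invFunOn_pos ⟨t, ht, rfl⟩
    (hfib _ hinv.1 t ht hinv.2).symm
  exact ⟨_, hK.continuousOn_of_comp hφ (hf.congr hfg.symm), hfg⟩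

-- Only `u 0, …, u n` are points of the partition; `u i` may exceed `b` for `i > n`.
structure IntervalPartition (a b : ℝ) where
  n : ℕ
  u : ℕ → ℝ
  mono : Monotone u
  zero : u 0 = a
  last : u n = b

namespace IntervalPartition

variable {a b c : ℝ}

lemma left_le (P : IntervalPartition a b) (i : ℕ) : a ≤ P.u i :=
  P.zero.symm.le.trans (P.mono (Nat.zero_le i))

lemma mem_Icc (P : IntervalPartition a b) {i : ℕ} (hi : i ≤ P.n) : P.u i ∈ Icc a b :=
  ⟨P.left_le i, (P.mono hi).trans P.last.le⟩

lemma left_le_right (P : IntervalPartition a b) : a ≤ b := (P.mem_Icc le_rfl).1.trans_eq P.last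

def single (hab : a ≤ b) : IntervalPartition a b where
  n := 1
  u i := if i = 0 then a else b
  mono i j hij := by dsimp only; split_ifs <;> first | exact le_rfl | exact hab | omega
  zero := rfl
  last := rfl

def ofMonotone {u : ℕ → ℝ} (hu : Monotone u) (n : ℕ) : IntervalPartition (u 0) (u n) where
  n := n
  u i := u (min i n)
  mono i j hij := hu (min_le_min_right n hij)
  zero := by simp
  last := by simp

def append (P : IntervalPartition a b) (Q : IntervalPartition b c) : IntervalPartition a c where
  n := P.n + Q.n
  u i := if i ≤ P.n then P.u i else Q.u (i - P.n)
  mono i j hij := by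
    dsimp only
    split_ifs with hi hj hj
    · exact P.mono hij
    · exact (P.mem_Icc hi).2.trans (Q.left_le _)
    · omega
    · exact Q.mono (by omega)
  zero := by simp [P.zero]
  last := by
    rcases Nat.eq_zero_or_pos Q.n with hQ | hQ
    · simp only [hQ, add_zero, le_rfl, if_true]
      rw [P.last, ← Q.last, hQ, Q.zero]
    · simp [show ¬P.n + Q.n ≤ P.n by omega, Q.last]

end IntervalPartition

section pVarPow

variable {E : Type*} [PseudoEMetricSpace E]

noncomputable def pVarSum (p : ℝ) (f : ℝ → E) (u : ℕ → ℝ) (n : ℕ) : ℝ≥0∞ :=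
  ∑ i ∈ Finset.range n, edist (f (u i)) (f (u (i + 1))) ^ p

noncomputable def pVarPow (p : ℝ) (f : ℝ → E) (a b : ℝ) : ℝ≥0∞ :=
  ⨆ P : IntervalPartition a b, pVarSum p f P.u P.n

variable {p : ℝ} {f : ℝ → E} {a b c : ℝ}

lemma pVarSum_congr {g : ℝ → E} {u v : ℕ → ℝ} {n : ℕ} (h : ∀ i ≤ n, f (u i) = g (v i)) :
    pVarSum p f u n = pVarSum p g v n :=
  Finset.sum_congr rfl fun i hi => by
    rw [Finset.mem_range] at hi
    rw [h i hi.le, h (i + 1) hi]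

lemma pVarSum_eq_add {u : ℕ → ℝ} {k n : ℕ} (hk : k ≤ n) :
    pVarSum p f u n = pVarSum p f u k + pVarSum p f (fun i => u (k + i)) (n - k) := by
  obtain ⟨m, rfl⟩ := Nat.exists_eq_add_of_le hk
  simp only [pVarSum, Finset.sum_range_add, Nat.add_sub_cancel_left, add_assoc]

lemma IntervalPartition.pVarSum_le (P : IntervalPartition a b) :
    pVarSum p f P.u P.n ≤ pVarPow p f a b :=
  le_iSup (fun P : IntervalPartition a b => pVarSum p f P.u P.n) P

lemma pVarPow_le {K : ℝ≥0∞} (h : ∀ P : IntervalPartition a b, pVarSum p f P.u P.n ≤ K) :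
    pVarPow p f a b ≤ K :=
  iSup_le h

lemma pVar_rpow (hp : 0 < p) (f : ℝ → E) (a b : ℝ) : pVar p f a b ^ p = pVarPow p f a b := by
  have hsum (n : ℕ) (t : Fin (n + 1) → ℝ) :
      ∑ i : Fin n, edist (f (t i.castSucc)) (f (t i.succ)) ^ p =
        pVarSum p f (fun i => t ⟨min i n, by omega⟩) n := by
    rw [pVarSum, ← Fin.sum_univ_eq_sum_range]
    refine Finset.sum_congr rfl fun i _ => ?_
    have h1 : t ⟨min i n, by omega⟩ = t i.castSucc :=
      congrArg t (Fin.ext (min_eq_left i.isLt.le))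
    have h2 : t ⟨min (i + 1) n, by omega⟩ = t i.succ :=
      congrArg t (Fin.ext (min_eq_left i.isLt))
    rw [h1, h2]
  apply le_antisymm
  · rw [← ENNReal.le_rpow_inv_iff hp, pVar]
    refine iSup_le fun n => iSup_le fun t => iSup_le fun ht => iSup_le fun h0 =>
      iSup_le fun hn => ?_
    rw [one_div, ENNReal.rpow_inv_le_iff hp, ENNReal.rpow_inv_rpow hp.ne', hsum]
    have hu : Monotone fun i => t ⟨min i n, by omega⟩ := fun i j hij =>
      ht (Fin.mk_le_mk.2 (min_le_min_right n hij))
    refine IntervalPartition.pVarSum_le ⟨n, _, hu, ?_, ?_⟩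
    · simpa using h0
    · simpa [Fin.last] using hn
  · refine pVarPow_le fun P => ?_
    rw [← ENNReal.rpow_inv_le_iff hp, ← one_div, pVar]
    refine le_iSup_of_le P.n <| le_iSup_of_le (fun i => P.u i) <|
      le_iSup_of_le (fun i j hij => P.mono hij) <| le_iSup_of_le P.zero <|
      le_iSup_of_le P.last ?_
    rw [hsum P.n fun i => P.u i]
    refine le_of_eq (congrArg (· ^ (1 / p)) (pVarSum_congr fun i hi => ?_))
    simp [min_eq_left hi]

lemma IntervalPartition.pVarSum_append (P : IntervalPartition a b) (Q : IntervalPartition b c) :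
    pVarSum p f (P.append Q).u (P.append Q).n = pVarSum p f P.u P.n + pVarSum p f Q.u Q.n := by
  rw [show (P.append Q).n = P.n + Q.n from rfl, pVarSum_eq_add (Nat.le_add_right P.n Q.n)]
  congr 1
  · exact pVarSum_congr fun i hi => congrArg f (if_pos hi)
  · rw [show P.n + Q.n - P.n = Q.n by omega]
    refine pVarSum_congr fun i _ => ?_
    rcases Nat.eq_zero_or_pos i with rfl | hi
    · simp [append, P.last, Q.zero]
    · simp [append, show ¬P.n + i ≤ P.n by omega]

lemma pVarPow_add_le (hab : a ≤ b) (hbc : b ≤ c) :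
    pVarPow p f a b + pVarPow p f b c ≤ pVarPow p f a c := by
  have : Nonempty (IntervalPartition a b) := ⟨.single hab⟩
  have : Nonempty (IntervalPartition b c) := ⟨.single hbc⟩
  refine ENNReal.iSup_add_iSup_le fun P Q => ?_
  rw [← P.pVarSum_append Q]
  exact (P.append Q).pVarSum_le

lemma pVarPow_of_lt (h : b < a) : pVarPow p f a b = 0 := by
  have : IsEmpty (IntervalPartition a b) := ⟨fun P => P.left_le_right.not_gt h⟩
  exact iSup_of_empty _

lemma monotone_pVarPow : Monotone (pVarPow p f a) := by
  intro b c hbc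
  rcases le_or_gt a b with hab | hab
  · exact le_add_right le_rfl |>.trans (pVarPow_add_le hab hbc)
  · simp [pVarPow_of_lt hab]

lemma pVarPow_anti_left (hab : a ≤ b) (hbc : b ≤ c) : pVarPow p f b c ≤ pVarPow p f a c :=
  le_add_left le_rfl |>.trans (pVarPow_add_le hab hbc)

lemma pVarSum_le_pVarPow {u : ℕ → ℝ} {n : ℕ} (hu : Monotone u) (ha : a ≤ u 0) (hb : u n ≤ b) :
    pVarSum p f u n ≤ pVarPow p f a b :=
  calc pVarSum p f u n = pVarSum p f (IntervalPartition.ofMonotone hu n).u n :=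
        pVarSum_congr fun i hi => by simp [IntervalPartition.ofMonotone, min_eq_left hi]
    _ ≤ pVarPow p f (u 0) (u n) := (IntervalPartition.ofMonotone hu n).pVarSum_le
    _ ≤ pVarPow p f a (u n) := pVarPow_anti_left ha (hu (Nat.zero_le n))
    _ ≤ pVarPow p f a b := monotone_pVarPow hb

lemma edist_rpow_le_pVarPow (hab : a ≤ b) : edist (f a) (f b) ^ p ≤ pVarPow p f a b := by
  simpa [pVarSum, IntervalPartition.single] using (IntervalPartition.single hab).pVarSum_le
    (p := p) (f := f)

lemma pVarPow_self (hp : 0 < p) (f : ℝ → E) (a : ℝ) : pVarPow p f a a = 0 := by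
  refine le_antisymm (pVarPow_le fun P => (Finset.sum_eq_zero fun i hi => ?_).le) bot_le
  rw [Finset.mem_range] at hi
  have hu (j : ℕ) (hj : j ≤ P.n) : P.u j = a := (P.mem_Icc hj).1.antisymm' (P.mem_Icc hj).2
  rw [hu i hi.le, hu (i + 1) hi, edist_self, ENNReal.zero_rpow_of_pos hp]

lemma edist_eq_zero_of_pVarPow_eq (hp : 0 < p) {s t : ℝ} (hs : a ≤ s) (ht : a ≤ t)
    (h : pVarPow p f a s = pVarPow p f a t) (hfin : pVarPow p f a t ≠ ⊤) :
    edist (f s) (f t) = 0 := by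
  wlog hst : s ≤ t generalizing s t
  · rw [edist_comm]
    exact this ht hs h.symm (h ▸ hfin) (le_of_not_ge hst)
  have hzero : pVarPow p f s t = 0 := by
    have hsfin : pVarPow p f a s ≠ ⊤ := h ▸ hfin
    refine nonpos_iff_eq_zero.1 (ENNReal.le_of_add_le_add_left hsfin
      ((pVarPow_add_le hs hst).trans (by rw [h, add_zero])))
  have := edist_rpow_le_pVarPow (p := p) (f := f) hst
  rw [hzero, nonpos_iff_eq_zero, ENNReal.rpow_eq_zero_iff] at this
  exact (this.resolve_right fun h => (h.2.trans hp).false).1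

lemma edist_le_edist_min_add_edist_max {x y : ℝ} (hxy : x ≤ y) (b : ℝ) :
    edist (f x) (f y) ≤
      edist (f (min x b)) (f (min y b)) + edist (f (max x b)) (f (max y b)) := by
  rcases le_total y b with hyb | hby
  · simp [min_eq_left hyb, min_eq_left (hxy.trans hyb), max_eq_right hyb,
      max_eq_right (hxy.trans hyb)]
  rcases le_total b x with hbx | hxb
  · simp [min_eq_right hby, min_eq_right hbx, max_eq_left hby, max_eq_left hbx]
  · simpa [min_eq_left hxb, min_eq_right hby, max_eq_right hxb, max_eq_left hby]
      using edist_triangle (f x) (f b) (f y)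

-- Split every increment at `b` and apply Minkowski's inequality.
lemma pVarPow_le_rpow_add (hp : 1 ≤ p) (hab : a ≤ b) (hbc : b ≤ c) :
    pVarPow p f a c ≤ (pVarPow p f a b ^ (1 / p) + pVarPow p f b c ^ (1 / p)) ^ p := by
  have hp0 : 0 < p := zero_lt_one.trans_le hp
  refine pVarPow_le fun P => ?_
  rw [← ENNReal.rpow_inv_le_iff hp0, ← one_div]
  have hmin : Monotone fun i => min (P.u i) b := fun i j hij => min_le_min_right b (P.mono hij)
  have hmax : Monotone fun i => max (P.u i) b := fun i j hij => max_le_max_right b (P.mono hij)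
  calc pVarSum p f P.u P.n ^ (1 / p)
      ≤ (∑ i ∈ Finset.range P.n, (edist (f (min (P.u i) b)) (f (min (P.u (i + 1)) b)) +
          edist (f (max (P.u i) b)) (f (max (P.u (i + 1)) b))) ^ p) ^ (1 / p) := by
        unfold pVarSum
        gcongr with i
        exact edist_le_edist_min_add_edist_max (P.mono i.le_succ) b
    _ ≤ pVarSum p f (fun i => min (P.u i) b) P.n ^ (1 / p) +
          pVarSum p f (fun i => max (P.u i) b) P.n ^ (1 / p) :=
        ENNReal.Lp_add_le _ _ _ hp
    _ ≤ pVarPow p f a b ^ (1 / p) + pVarPow p f b c ^ (1 / p) := by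
        gcongr
        · exact pVarSum_le_pVarPow hmin (le_min (P.left_le 0) hab) (min_le_right _ _)
        · exact pVarSum_le_pVarPow hmax (le_max_right _ _) (max_le P.last.le hbc)

lemma IntervalPartition.exists_pVarSum_le (hp : 0 < p) (P : IntervalPartition a b)
    (hab : a < b) :
    ∃ v ∈ Ioc a b, pVarSum p f P.u P.n ≤ edist (f a) (f v) ^ p + pVarPow p f v b := by
  have hlast : a < P.u P.n := by rwa [P.last]
  have hex : ∃ j, a < P.u j := ⟨P.n, hlast⟩
  have hj0 : Nat.find hex ≠ 0 := fun h => by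
    simpa [h, P.zero] using Nat.find_spec hex
  obtain ⟨k, hk⟩ : ∃ k, Nat.find hex = k + 1 := Nat.exists_eq_add_one_of_ne_zero hj0
  have hkn : k + 1 ≤ P.n := hk ▸ Nat.find_min' hex hlast
  have hflat (i : ℕ) (hi : i ≤ k) : P.u i = a :=
    (not_lt.1 (Nat.find_min hex (by omega))).antisymm (P.left_le i)
  refine ⟨P.u (k + 1), ⟨hk ▸ Nat.find_spec hex, (P.mem_Icc hkn).2⟩, ?_⟩
  rw [pVarSum_eq_add hkn]
  refine add_le_add ?_ ?_
  · have hzero : ∑ i ∈ Finset.range k, edist (f (P.u i)) (f (P.u (i + 1))) ^ p = 0 :=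
      Finset.sum_eq_zero fun i hi => by
        rw [Finset.mem_range] at hi
        rw [hflat i hi.le, hflat (i + 1) hi, edist_self, ENNReal.zero_rpow_of_pos hp]
    rw [pVarSum, Finset.sum_range_succ, hzero, zero_add, hflat k le_rfl]
  · refine pVarSum_le_pVarPow (fun i j hij => P.mono (by omega)) le_rfl ?_
    rw [Nat.add_sub_cancel' hkn, P.last]

lemma tendsto_pVarPow_nhdsGT (hp : 0 < p) (hab : a < b) (hf : ContinuousWithinAt f (Icc a b) a)
    (hfin : pVarPow p f a b ≠ ⊤) : Tendsto (pVarPow p f a) (𝓝[>] a) (𝓝 0) := by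
  set L := sInf (pVarPow p f a '' Ioi a)
  suffices hL0 : L = 0 by
    rw [← hL0]
    exact (monotone_pVarPow (p := p) (f := f) (a := a)).tendsto_nhdsGT a
  have hL (v : ℝ) (hv : a < v) : L ≤ pVarPow p f a v := sInf_le (mem_image_of_mem _ hv)
  refine le_antisymm (ENNReal.le_of_forall_pos_le_add fun ε hε _ => ?_) bot_le
  have hsmall : Tendsto (fun v => edist (f a) (f v) ^ p) (𝓝[>] a) (𝓝 0) := by
    have hfa : Tendsto f (𝓝[>] a) (𝓝 (f a)) := hf.mono_of_mem_nhdsWithin (Icc_mem_nhdsGT hab)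
    simpa [Function.comp_def, ENNReal.zero_rpow_of_pos hp] using
      ((ENNReal.continuous_rpow_const (y := p)).tendsto _).comp
        ((tendsto_const_nhds (x := f a)).edist hfa)
  obtain ⟨s, hs, hsub⟩ := mem_nhdsGT_iff_exists_Ioc_subset.1
    ((hsmall.eventually (gt_mem_nhds (ENNReal.coe_pos.2 hε))).and (Ioo_mem_nhdsGT hab))
  have hsb : s < b := (hsub ⟨hs, le_rfl⟩).2.2
  have hsfin : pVarPow p f a s ≠ ⊤ := ne_top_of_le_ne_top hfin (monotone_pVarPow hsb.le)
  have hLfin : L ≠ ⊤ := ne_top_of_le_ne_top hsfin (hL s hs)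
  -- A partition of `[a, s]` gains less than `ε` on its first step `[a, v]`; the rest lies in
  -- `[v, s]`, and `pVarPow p f v s ≤ pVarPow p f a s - L` by superadditivity since `v > a`.
  have hbound : pVarPow p f a s ≤ ε + (pVarPow p f a s - L) := pVarPow_le fun P => by
    obtain ⟨v, hv, hle⟩ := P.exists_pVarSum_le (f := f) hp hs
    refine hle.trans (add_le_add (hsub hv).1.le (ENNReal.le_sub_of_add_le_left hLfin ?_))
    exact (add_le_add (hL v hv.1) le_rfl).trans (pVarPow_add_le hv.1.le hv.2)
  refine ENNReal.le_of_add_le_add_right hsfin ?_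
  calc L + pVarPow p f a s ≤ L + (ε + (pVarPow p f a s - L)) := add_le_add le_rfl hbound
    _ = 0 + ε + pVarPow p f a s := by
        rw [zero_add, add_left_comm, add_tsub_cancel_of_le (hL s hs)]

lemma continuousWithinAt_pVarPow_left (hf : ContinuousOn f (Icc a b)) :
    ContinuousWithinAt (pVarPow p f a) (Icc a b) b := by
  refine tendsto_order.2 ⟨fun c hc => ?_, fun c hc => ?_⟩
  · obtain ⟨P, hP⟩ := lt_iSup_iff.1 hc
    let F (s : ℝ) : ℝ≥0∞ := pVarSum p f (fun i => min (P.u i) s) P.n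
    have hFb : F b = pVarSum p f P.u P.n :=
      pVarSum_congr fun i hi => congrArg f (min_eq_left (P.mem_Icc hi).2)
    have hterm (i : ℕ) : ContinuousWithinAt (fun s => f (min (P.u i) s)) (Icc a b) b :=
      (hf _ ⟨le_min (P.left_le i) P.left_le_right, min_le_right _ _⟩).comp
        (continuous_const.min continuous_id).continuousWithinAt
        fun s hs => ⟨le_min (P.left_le i) hs.1, (min_le_right _ _).trans hs.2⟩
    have hF : ContinuousWithinAt F (Icc a b) b :=
      tendsto_finsetSum _ fun i _ =>
        ((ENNReal.continuous_rpow_const (y := p)).tendsto _).comp ((hterm i).edist (hterm (i + 1)))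
    filter_upwards [hF.eventually (lt_mem_nhds (hFb ▸ hP)), self_mem_nhdsWithin] with s hcs hs
    exact hcs.trans_le (pVarSum_le_pVarPow (fun i j hij => min_le_min_right s (P.mono hij))
      (le_min (P.left_le 0) hs.1) (min_le_right _ _))
  · filter_upwards [self_mem_nhdsWithin] with s hs using (monotone_pVarPow hs.2).trans_lt hc

lemma continuousOn_pVarPow (hp : 1 ≤ p) (hf : ContinuousOn f (Icc a b))
    (hfin : pVarPow p f a b ≠ ⊤) : ContinuousOn (pVarPow p f a) (Icc a b) := by
  have hp0 : 0 < p := zero_lt_one.trans_le hp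
  intro t ht
  rw [← Icc_union_Icc_eq_Icc ht.1 ht.2]
  refine (continuousWithinAt_pVarPow_left (hf.mono (Icc_subset_Icc_right ht.2))).union ?_
  rcases ht.2.eq_or_lt with rfl | htb
  · rw [Icc_self]
    exact continuousWithinAt_singleton
  refine (continuousWithinAt_Ioi_iff_Ici.1 ?_).mono Icc_subset_Ici_self
  have hsmall : Tendsto (pVarPow p f t) (𝓝[>] t) (𝓝 0) :=
    tendsto_pVarPow_nhdsGT hp0 htb ((hf t ht).mono (Icc_subset_Icc_left ht.1))
      (ne_top_of_le_ne_top hfin (pVarPow_anti_left ht.1 ht.2))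
  have hupper : Tendsto (fun s => (pVarPow p f a t ^ (1 / p) + pVarPow p f t s ^ (1 / p)) ^ p)
      (𝓝[>] t) (𝓝 (pVarPow p f a t)) := by
    have := ((ENNReal.continuous_rpow_const (y := p)).tendsto _).comp
      ((tendsto_const_nhds (x := pVarPow p f a t ^ (1 / p))).add
        (((ENNReal.continuous_rpow_const (y := 1 / p)).tendsto 0).comp hsmall))
    simpa [Function.comp_def, ENNReal.zero_rpow_of_pos (inv_pos.2 hp0),
      ENNReal.rpow_inv_rpow hp0.ne'] using this
  refine tendsto_of_tendsto_of_tendsto_of_le_of_le' tendsto_const_nhds hupper ?_ ?_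
  · filter_upwards [self_mem_nhdsWithin] with s hs using monotone_pVarPow (le_of_lt hs)
  · filter_upwards [self_mem_nhdsWithin] with s hs using pVarPow_le_rpow_add hp ht.1 (le_of_lt hs)

lemma pVarPow_eq_of_eqOn_comp {g : ℝ → E} {φ : ℝ → ℝ} (hφ : MonotoneOn φ (Icc a b))
    (hsurj : SurjOn φ (Icc a b) (Icc (φ a) (φ b))) (h : EqOn f (g ∘ φ) (Icc a b)) :
    pVarPow p g (φ a) (φ b) = pVarPow p f a b := by
  apply le_antisymm
  · refine pVarPow_le fun Q => ?_
    let ψ := Function.invFunOn φ (Icc a b)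
    have hψ {y : ℝ} (hy : y ∈ Icc (φ a) (φ b)) : ψ y ∈ Icc a b ∧ φ (ψ y) = y :=
      Function.invFunOn_pos (hsurj hy)
    have hmem (i : ℕ) : Q.u (min i Q.n) ∈ Icc (φ a) (φ b) := Q.mem_Icc (min_le_right _ _)
    -- a section of a monotone map is monotone
    have hmono : Monotone fun i => ψ (Q.u (min i Q.n)) := by
      intro i j hij
      by_contra hlt
      have := hφ (hψ (hmem j)).1 (hψ (hmem i)).1 (le_of_not_ge hlt)
      rw [(hψ (hmem i)).2, (hψ (hmem j)).2] at this
      exact hlt (congrArg ψ (this.antisymm (Q.mono (min_le_min_right _ hij)))).symm.le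
    calc pVarSum p g Q.u Q.n = pVarSum p f (fun i => ψ (Q.u (min i Q.n))) Q.n :=
          pVarSum_congr fun i hi => by
            rw [h (hψ (hmem i)).1, Function.comp_apply, (hψ (hmem i)).2, min_eq_left hi]
      _ ≤ pVarPow p f a b := pVarSum_le_pVarPow hmono (hψ (hmem 0)).1.1 (hψ (hmem _)).1.2
  · refine pVarPow_le fun P => ?_
    have hmono : Monotone fun i => φ (P.u (min i P.n)) := fun i j hij =>
      hφ (P.mem_Icc (min_le_right _ _)) (P.mem_Icc (min_le_right _ _))
        (P.mono (min_le_min_right _ hij))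
    calc pVarSum p f P.u P.n = pVarSum p g (fun i => φ (P.u (min i P.n))) P.n :=
          pVarSum_congr fun i hi => by rw [min_eq_left hi]; exact h (P.mem_Icc hi)
      _ ≤ pVarPow p g (φ a) (φ b) := pVarSum_le_pVarPow hmono (by simp [P.zero])
          (hφ (P.mem_Icc (min_le_right _ _)) (right_mem_Icc.2 P.left_le_right)
            (P.mem_Icc (min_le_right _ _)).2)

end pVarPow

noncomputable def normalizedTime (T : ℝ) (ω : ℝ → ℝ≥0∞) (t : ℝ) : ℝ :=
  T * (ω t).toReal / (ω T).toReal

section normalizedTime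

variable {T : ℝ} {ω : ℝ → ℝ≥0∞}

lemma normalizedTime_zero (h0 : ω 0 = 0) : normalizedTime T ω 0 = 0 := by
  simp [normalizedTime, h0]

lemma normalizedTime_self (hpos : ω T ≠ 0) (hfin : ω T ≠ ⊤) : normalizedTime T ω T = T := by
  simp [normalizedTime, (ENNReal.toReal_pos hpos hfin).ne']

lemma monotoneOn_normalizedTime (hT : 0 ≤ T) (hω : Monotone ω) (hfin : ω T ≠ ⊤) :
    MonotoneOn (normalizedTime T ω) (Iic T) := fun s _ t ht hst => by
  have := ENNReal.toReal_mono (ne_top_of_le_ne_top hfin (hω ht)) (hω hst)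
  unfold normalizedTime
  gcongr

lemma continuousOn_normalizedTime (hω : Monotone ω) (hc : ContinuousOn ω (Icc 0 T))
    (hfin : ω T ≠ ⊤) : ContinuousOn (normalizedTime T ω) (Icc 0 T) :=
  (continuousOn_const.mul (ENNReal.continuousOn_toReal.comp hc
    fun _ ht => ne_top_of_le_ne_top hfin (hω ht.2))).div_const _

lemma image_normalizedTime (hT : 0 ≤ T) (hω : Monotone ω) (hc : ContinuousOn ω (Icc 0 T))
    (h0 : ω 0 = 0) (hpos : ω T ≠ 0) (hfin : ω T ≠ ⊤) :
    normalizedTime T ω '' Icc 0 T = Icc 0 T := by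
  have hends : Icc (normalizedTime T ω 0) (normalizedTime T ω T) = Icc 0 T := by
    rw [normalizedTime_zero h0, normalizedTime_self hpos hfin]
  refine (((monotoneOn_normalizedTime hT hω hfin).mono Icc_subset_Iic_self).mapsTo_Icc
    |>.image_subset.trans_eq hends).antisymm ?_
  exact hends ▸ intermediate_value_Icc hT (continuousOn_normalizedTime hω hc hfin)

lemma eq_of_normalizedTime_eq (hT : T ≠ 0) (hω : Monotone ω) (hpos : ω T ≠ 0) (hfin : ω T ≠ ⊤)
    {s t : ℝ} (hs : s ≤ T) (ht : t ≤ T) (h : normalizedTime T ω s = normalizedTime T ω t) :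
    ω s = ω t := by
  rw [← ENNReal.toReal_eq_toReal_iff' (ne_top_of_le_ne_top hfin (hω hs))
    (ne_top_of_le_ne_top hfin (hω ht))]
  simpa [normalizedTime, hT, (ENNReal.toReal_pos hpos hfin).ne'] using h

lemma ofReal_normalizedTime_div_mul (hT : T ≠ 0) (hω : Monotone ω) (hpos : ω T ≠ 0)
    (hfin : ω T ≠ ⊤) {s : ℝ} (hs : s ≤ T) :
    ENNReal.ofReal (normalizedTime T ω s / T) * ω T = ω s := by
  have hpos' := ENNReal.toReal_pos hpos hfin
  rw [show normalizedTime T ω s / T = (ω s).toReal / (ω T).toReal by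
      unfold normalizedTime; field_simp,
    ENNReal.ofReal_div_of_pos hpos', ENNReal.ofReal_toReal (ne_top_of_le_ne_top hfin (hω hs)),
    ENNReal.ofReal_toReal hfin, ENNReal.div_mul_cancel hpos hfin]

end normalizedTime

/-- every continuous path of finite `p`-variation admits a Hölder-control
reparameterisation: `X = X̃ ∘ φ` with `φ : [0,T] → [0,T]` a continuous nondecreasing
surjection and `‖X̃‖_{p-var;[0,t]}^p = (t/T)·‖X‖_{p-var;[0,T]}^p` for all `t ∈ [0,T]`. -/
theorem exists_holder_control_reparam {E : Type*} [MetricSpace E]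
    (T : ℝ) (hT : 0 < T) (p : ℝ) (hp : 1 ≤ p)
    (X : ℝ → E) (hcont : ContinuousOn X (Icc 0 T)) (hfin : pVar p X 0 T ≠ ⊤) :
    ∃ (φ : ℝ → ℝ) (Xt : ℝ → E),
      ContinuousOn φ (Icc 0 T) ∧ MonotoneOn φ (Icc 0 T) ∧ φ '' Icc 0 T = Icc 0 T ∧
      ContinuousOn Xt (Icc 0 T) ∧
      (∀ t ∈ Icc (0 : ℝ) T, X t = Xt (φ t)) ∧
      (∀ t ∈ Icc (0 : ℝ) T,
        pVar p Xt 0 t ^ p = ENNReal.ofReal (t / T) * pVar p X 0 T ^ p) := by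
  have hp0 : 0 < p := zero_lt_one.trans_le hp
  replace hfin : pVarPow p X 0 T ≠ ⊤ :=
    pVar_rpow hp0 X 0 T ▸ ENNReal.rpow_ne_top_of_nonneg hp0.le hfin
  simp_rw [pVar_rpow hp0]
  rcases eq_or_ne (pVarPow p X 0 T) 0 with hΩ0 | hΩ0
  · refine ⟨id, X, continuousOn_id, monotoneOn_id, image_id _, hcont, fun _ _ => rfl,
      fun t ht => ?_⟩
    rw [hΩ0, mul_zero, ← nonpos_iff_eq_zero, ← hΩ0]
    exact monotone_pVarPow ht.2
  have hω := continuousOn_pVarPow hp hcont hfin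
  set φ := normalizedTime T (pVarPow p X 0)
  have hφcont : ContinuousOn φ (Icc 0 T) := continuousOn_normalizedTime monotone_pVarPow hω hfin
  have hφmono : MonotoneOn φ (Icc 0 T) :=
    (monotoneOn_normalizedTime hT.le monotone_pVarPow hfin).mono Icc_subset_Iic_self
  have himage : φ '' Icc 0 T = Icc 0 T :=
    image_normalizedTime hT.le monotone_pVarPow hω (pVarPow_self hp0 X 0) hΩ0 hfin
  have hfib (s : ℝ) (hs : s ∈ Icc 0 T) (t : ℝ) (ht : t ∈ Icc 0 T) (hst : φ s = φ t) :
      X s = X t :=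
    edist_eq_zero.1 <| edist_eq_zero_of_pVarPow_eq hp0 hs.1 ht.1
      (eq_of_normalizedTime_eq hT.ne' monotone_pVarPow hΩ0 hfin hs.2 ht.2 hst)
      (ne_top_of_le_ne_top hfin (monotone_pVarPow ht.2))
  obtain ⟨Xt, hXt, hXXt⟩ := isCompact_Icc.exists_continuousOn_eqOn_comp hφcont hcont hfib
  refine ⟨φ, Xt, hφcont, hφmono, himage, himage ▸ hXt, hXXt, fun t ht => ?_⟩
  obtain ⟨s, hs, rfl⟩ := himage.symm ▸ ht
  have hφ0 : φ 0 = 0 := normalizedTime_zero (pVarPow_self hp0 X 0)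
  calc pVarPow p Xt 0 (φ s) = pVarPow p Xt (φ 0) (φ s) := by rw [hφ0]
    _ = pVarPow p X 0 s := pVarPow_eq_of_eqOn_comp (hφmono.mono (Icc_subset_Icc_right hs.2))
          (intermediate_value_Icc hs.1 (hφcont.mono (Icc_subset_Icc_right hs.2)))
          (hXXt.mono (Icc_subset_Icc_right hs.2))
    _ = ENNReal.ofReal (φ s / T) * pVarPow p X 0 T :=
        (ofReal_normalizedTime_div_mul hT.ne' monotone_pVarPow hΩ0 hfin hs.2).symm
end

section
/- Let (E,d) be a metric space, T > 0, p ≥ 1, and let X : [0,T] → E be a path of finite p-variation satisfying ‖X‖_{p-var;[0,t]}^p = (t/T)·‖X‖_{p-var;[0,T]}^p for all t ∈ [0,T]. Then X is (1/p)-Hölder continuous with d(X(s), X(t)) ≤ T^{−1/p}·‖X‖_{p-var;[0,T]}·(t − s)^{1/p} for all 0 ≤ s ≤ t ≤ T. -/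
open Set Filter
open scoped ENNReal NNReal Topology

lemma Fin.monotone_snoc {α : Type*} [Preorder α] {n : ℕ} {u : Fin (n + 1) → α} {x : α}
    (hu : Monotone u) (hx : u (Fin.last n) ≤ x) : Monotone (Fin.snoc u x : Fin (n + 2) → α) := by
  refine Fin.monotone_iff_le_succ.2 fun i => ?_
  induction i using Fin.lastCases with
  | last => simpa only [Fin.succ_last, Fin.snoc_castSucc, Fin.snoc_last] using hx
  | cast j =>
    simpa only [Fin.succ_castSucc, Fin.snoc_castSucc] using hu (Fin.castSucc_le_succ j)

lemma Fin.sum_snoc_consecutive {α M : Type*} [AddCommMonoid M] {n : ℕ} (g : α → α → M)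
    (u : Fin (n + 1) → α) (x : α) :
    ∑ i : Fin (n + 1), g ((Fin.snoc u x : Fin (n + 2) → α) i.castSucc)
        ((Fin.snoc u x : Fin (n + 2) → α) i.succ)
      = ∑ i : Fin n, g (u i.castSucc) (u i.succ) + g (u (Fin.last n)) x := by
  simp only [Fin.sum_univ_castSucc (n := n), Fin.succ_castSucc, Fin.succ_last,
    Fin.snoc_castSucc, Fin.snoc_last]

section PVariation

variable {E : Type*} [PseudoEMetricSpace E] {p : ℝ} (X : ℝ → E) {a b : ℝ}

lemma sum_edist_rpow_le_pVar_rpow (hp : 0 < p) {n : ℕ} {u : Fin (n + 1) → ℝ}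
    (hu : Monotone u) (h0 : u 0 = a) (hlast : u (Fin.last n) = b) :
    ∑ i : Fin n, edist (X (u i.castSucc)) (X (u i.succ)) ^ p ≤ pVar p X a b ^ p := by
  refine (ENNReal.rpow_inv_le_iff hp).1 ?_
  rw [← one_div]
  exact le_iSup_of_le n <| le_iSup_of_le u <| le_iSup_of_le hu <| le_iSup_of_le h0 <|
    le_iSup_of_le hlast le_rfl

lemma pVar_rpow_le (hp : 0 < p) {c : ℝ≥0∞}
    (h : ∀ (n : ℕ) (u : Fin (n + 1) → ℝ), Monotone u → u 0 = a → u (Fin.last n) = b →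
      ∑ i : Fin n, edist (X (u i.castSucc)) (X (u i.succ)) ^ p ≤ c) :
    pVar p X a b ^ p ≤ c := by
  refine (ENNReal.le_rpow_inv_iff hp).1 ?_
  rw [← one_div]
  exact iSup_le fun n => iSup_le fun u => iSup_le fun hu => iSup_le fun h0 =>
    iSup_le fun hlast => ENNReal.rpow_le_rpow (h n u hu h0 hlast) (by positivity)

theorem pVar_rpow_add_edist_rpow_le (hp : 0 < p) {s t : ℝ} (has : a ≤ s) (hst : s ≤ t) :
    pVar p X a s ^ p + edist (X s) (X t) ^ p ≤ pVar p X a t ^ p := by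
  have extend : ∀ (n : ℕ) (u : Fin (n + 1) → ℝ), Monotone u → u 0 = a → u (Fin.last n) = s →
      ∑ i : Fin n, edist (X (u i.castSucc)) (X (u i.succ)) ^ p + edist (X s) (X t) ^ p
        ≤ pVar p X a t ^ p := fun n u hu h0 hlast => by
    have := sum_edist_rpow_le_pVar_rpow X hp (Fin.monotone_snoc hu (hlast ▸ hst))
      (by simpa using h0) (Fin.snoc_last (α := fun _ => ℝ) t u)
    rwa [Fin.sum_snoc_consecutive (fun x y => edist (X x) (X y) ^ p), hlast] at this
  have hle : edist (X s) (X t) ^ p ≤ pVar p X a t ^ p :=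
    le_add_self.trans <| extend 1 ![a, s] (Fin.monotone_iff_le_succ.2 fun i => by
      fin_cases i; simpa using has) rfl rfl
  obtain htop | hne := eq_or_ne (edist (X s) (X t) ^ p) ⊤
  · rw [htop, top_le_iff] at hle
    exact hle ▸ le_top
  calc pVar p X a s ^ p + edist (X s) (X t) ^ p
      ≤ (pVar p X a t ^ p - edist (X s) (X t) ^ p) + edist (X s) (X t) ^ p :=
        add_le_add_left (pVar_rpow_le X hp fun n u hu h0 hlast =>
          ENNReal.le_sub_of_add_le_right hne (extend n u hu h0 hlast)) _
    _ = pVar p X a t ^ p := tsub_add_cancel_of_le hle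

end PVariation

lemma dist_le_of_edist_rpow_le {E : Type*} [PseudoMetricSpace E] {x y : E} {p r : ℝ}
    {C : ℝ≥0∞} (hp : 0 < p) (hr : 0 ≤ r) (hC : C ≠ ⊤)
    (h : edist x y ^ p ≤ ENNReal.ofReal r * C ^ p) :
    dist x y ≤ r ^ (1 / p) * C.toReal := by
  have hroot : edist x y ≤ ENNReal.ofReal (r ^ (1 / p)) * C := by
    rwa [← ENNReal.rpow_le_rpow_iff hp, ENNReal.mul_rpow_of_nonneg _ _ hp.le,
      ENNReal.ofReal_rpow_of_nonneg (by positivity) hp.le, one_div, Real.rpow_inv_rpow hr hp.ne']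
  calc dist x y = (edist x y).toReal := dist_edist x y
    _ ≤ (ENNReal.ofReal (r ^ (1 / p)) * C).toReal :=
        ENNReal.toReal_mono (ENNReal.mul_ne_top ENNReal.ofReal_ne_top hC) hroot
    _ = r ^ (1 / p) * C.toReal := by
        rw [ENNReal.toReal_mul, ENNReal.toReal_ofReal (by positivity)]

/-- a path of finite `p`-variation with linear `p`-variation control
`‖X‖_{p-var;[0,t]}^p = (t/T)·‖X‖_{p-var;[0,T]}^p` is `(1/p)`-Hölder continuous with
`d(X(s), X(t)) ≤ T^{-1/p}·‖X‖_{p-var;[0,T]}·(t − s)^{1/p}`. -/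
theorem holder_of_linear_control {E : Type*} [MetricSpace E]
    (T : ℝ) (hT : 0 < T) (p : ℝ) (hp : 1 ≤ p)
    (X : ℝ → E) (hfin : pVar p X 0 T ≠ ⊤)
    (hctrl : ∀ t ∈ Icc (0 : ℝ) T,
      pVar p X 0 t ^ p = ENNReal.ofReal (t / T) * pVar p X 0 T ^ p) :
    ∀ s t : ℝ, 0 ≤ s → s ≤ t → t ≤ T →
      dist (X s) (X t) ≤ T ^ (-(1 / p)) * (pVar p X 0 T).toReal * (t - s) ^ (1 / p) := by
  intro s t hs hst htT
  have hp0 : 0 < p := one_pos.trans_le hp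
  have hsplit : ENNReal.ofReal (t / T)
      = ENNReal.ofReal (s / T) + ENNReal.ofReal ((t - s) / T) := by
    rw [← ENNReal.ofReal_add (by positivity) (div_nonneg (sub_nonneg.2 hst) hT.le)]
    ring_nf
  have hsuper := pVar_rpow_add_edist_rpow_le X hp0 hs hst
  rw [hctrl s ⟨hs, hst.trans htT⟩, hctrl t ⟨hs.trans hst, htT⟩, hsplit, add_mul] at hsuper
  have hincr : edist (X s) (X t) ^ p ≤ ENNReal.ofReal ((t - s) / T) * pVar p X 0 T ^ p :=
    (ENNReal.add_le_add_iff_left (ENNReal.mul_ne_top ENNReal.ofReal_ne_top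
      (ENNReal.rpow_ne_top_of_nonneg hp0.le hfin))).1 hsuper
  calc dist (X s) (X t) ≤ ((t - s) / T) ^ (1 / p) * (pVar p X 0 T).toReal :=
        dist_le_of_edist_rpow_le hp0 (div_nonneg (sub_nonneg.2 hst) hT.le) hfin hincr
    _ = T ^ (-(1 / p)) * (pVar p X 0 T).toReal * (t - s) ^ (1 / p) := by
        rw [Real.div_rpow (sub_nonneg.2 hst) hT.le, Real.rpow_neg hT.le]
        ring
end

section
/- Let T > 0 and let γ : [0,T] → ℝ^d be a continuous path of finite 1-variation satisfying ‖γ‖_{1-var;[0,t]} = (t/T)·‖γ‖_{1-var;[0,T]} for all t ∈ [0,T] (constant-speed parameterisation). Then γ is Lipschitz, γ is differentiable at almost every t ∈ [0,T], and its derivative satisfies ‖γ′(t)‖ = ‖γ‖_{1-var;[0,T]}/T for almost every t ∈ [0,T]. -/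
open Set Filter MeasureTheory
open scoped ENNReal NNReal Topology

/-!
Write `V` for the 1-variation on `[0, T]` and `l = V / T`. At constant speed the variation of `γ`
on `[x, y]` is `l (y - x)`, so `γ` is `l`-Lipschitz; by Rademacher's theorem it is
differentiable almost everywhere, with `‖γ'‖ ≤ l`. Conversely, testing an increment against a
norming functional and applying the fundamental theorem of calculus for absolutely continuous
scalar functions gives `‖γ y - γ x‖ ≤ ∫_x^y ‖γ'‖`, whence `l T = V ≤ ∫_0^T ‖γ'‖ ≤ l T`.
Equality forces `‖γ'‖ = l` almost everywhere.
-/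

section pVar

variable {E : Type*} [PseudoEMetricSpace E] {f : ℝ → E} {a b : ℝ}

theorem pVar_one_le_eVariationOn : pVar 1 f a b ≤ eVariationOn f (Icc a b) := by
  simp only [pVar, ENNReal.rpow_one, div_one]
  refine iSup_le fun n => iSup_le fun t => iSup_le fun ht => iSup_le fun ha => iSup_le fun hb => ?_
  let u : ℕ → ℝ := fun i => t (Fin.clamp i n)
  have hu : Monotone u := fun i j hij => ht (Fin.mk_le_mk.2 (min_le_min_right n hij))
  have hmem : ∀ i, u i ∈ Icc a b := fun i =>
    ⟨ha ▸ ht (Fin.zero_le _), hb ▸ ht (Fin.le_last _)⟩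
  calc ∑ i : Fin n, edist (f (t i.castSucc)) (f (t i.succ))
      = ∑ i ∈ Finset.range n, edist (f (u (i + 1))) (f (u i)) := by
        rw [← Fin.sum_univ_eq_sum_range (fun i => edist (f (u (i + 1))) (f (u i)))]
        refine Finset.sum_congr rfl fun i _ => ?_
        rw [edist_comm]
        congr <;> ext <;> simp [Fin.clamp]
    _ ≤ eVariationOn f (Icc a b) := eVariationOn.sum_le hu hmem

theorem sum_edist_le_pVar_one {m : ℕ} {v : ℕ → ℝ} (hv : Monotone v) (ha : v 0 = a)
    (hb : v m = b) :
    ∑ i ∈ Finset.range m, edist (f (v (i + 1))) (f (v i)) ≤ pVar 1 f a b := by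
  simp only [pVar, ENNReal.rpow_one, div_one]
  refine le_iSup_of_le m <| le_iSup_of_le (fun j => v j) <| le_iSup_of_le (fun i j h => hv h) <|
    le_iSup_of_le ha <| le_iSup_of_le hb (le_of_eq ?_)
  rw [← Fin.sum_univ_eq_sum_range]
  exact Finset.sum_congr rfl fun i _ => edist_comm _ _

theorem eVariationOn_le_pVar_one : eVariationOn f (Icc a b) ≤ pVar 1 f a b := by
  refine iSup_le fun ⟨n, u, hu, hmem⟩ => ?_
  -- the partition `a, u 0, …, u n, b`
  let v : ℕ → ℝ := fun i => Nat.casesOn i a fun i => if i ≤ n then u i else b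
  have hv : Monotone v := by
    refine monotone_nat_of_le_succ fun i => ?_
    cases i with
    | zero => simpa [v] using (hmem 0).1
    | succ i =>
      simp only [v]
      split_ifs <;> first | omega | exact hu (Nat.le_succ i) | exact (hmem i).2 | exact le_rfl
  calc ∑ i ∈ Finset.range n, edist (f (u (i + 1))) (f (u i))
      = ∑ i ∈ Finset.range n, edist (f (v (i + 1 + 1))) (f (v (i + 1))) := by
        refine Finset.sum_congr rfl fun i hi => ?_
        have hi : i < n := Finset.mem_range.mp hi
        simp [v, hi.le, Nat.succ_le_of_lt hi]
    _ ≤ ∑ i ∈ Finset.range (n + 1), edist (f (v (i + 1 + 1))) (f (v (i + 1))) :=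
        Finset.sum_le_sum_of_subset (Finset.range_subset_range.mpr n.le_succ)
    _ ≤ ∑ i ∈ Finset.range (n + 2), edist (f (v (i + 1))) (f (v i)) := by
        rw [Finset.sum_range_succ' _ (n + 1)]
        exact le_self_add
    _ ≤ pVar 1 f a b := sum_edist_le_pVar_one hv rfl (by simp [v])

theorem pVar_one_eq_eVariationOn : pVar 1 f a b = eVariationOn f (Icc a b) :=
  pVar_one_le_eVariationOn.antisymm eVariationOn_le_pVar_one

end pVar

section ConstantSpeed

variable {E : Type*} [PseudoEMetricSpace E] {f : ℝ → E} {s : Set ℝ} {l : ℝ≥0} {a b : ℝ}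

theorem hasConstantSpeedOnWith_Icc_of_eVariationOn_Icc_left
    (h : ∀ t ∈ Icc a b, eVariationOn f (Icc a t) = ENNReal.ofReal (l * (t - a))) :
    HasConstantSpeedOnWith f (Icc a b) l := by
  rw [hasConstantSpeedOnWith_iff_ordered]
  intro x hx y hy hxy
  rw [inter_eq_right.mpr (Icc_subset_Icc hx.1 hy.2)]
  have hsplit := eVariationOn.Icc_add_Icc f (s := univ) hx.1 hxy (mem_univ x)
  simp only [univ_inter] at hsplit
  rw [h x hx, h y ⟨hx.1.trans hxy, hy.2⟩, show l * (y - a) = l * (x - a) + l * (y - x) by ring,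
    ENNReal.ofReal_add (by have := hx.1; positivity) (by have := hxy; positivity)] at hsplit
  exact (ENNReal.add_right_inj ENNReal.ofReal_ne_top).mp hsplit

theorem HasConstantSpeedOnWith.lipschitzOnWith (h : HasConstantSpeedOnWith f s l) :
    LipschitzOnWith l f s := by
  intro x hx y hy
  wlog hxy : x ≤ y generalizing x y
  · rw [edist_comm, edist_comm x]
    exact this hy hx (le_of_not_ge hxy)
  calc edist (f x) (f y) ≤ eVariationOn f (s ∩ Icc x y) :=
        eVariationOn.edist_le f ⟨hx, le_rfl, hxy⟩ ⟨hy, hxy, le_rfl⟩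
    _ = ENNReal.ofReal (l * (y - x)) := h hx hy
    _ = l * edist x y := by
        rw [ENNReal.ofReal_mul l.coe_nonneg, edist_dist, Real.dist_eq, abs_sub_comm,
          abs_of_nonneg (sub_nonneg.2 hxy), ENNReal.ofReal_coe_nnreal]

end ConstantSpeed

section Lipschitz

variable {E : Type*} [NormedAddCommGroup E] [NormedSpace ℝ E] [FiniteDimensional ℝ E]
  {f : ℝ → E} {K : ℝ≥0} {a b : ℝ}

theorem LipschitzWith.intervalIntegrable_norm_deriv (hf : LipschitzWith K f) (a b : ℝ) :
    IntervalIntegrable (fun t => ‖deriv f t‖) volume a b :=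
  (intervalIntegrable_const (c := (K : ℝ))).mono_fun'
    (aestronglyMeasurable_deriv f _).norm (ae_of_all _ fun _ => by
      simpa using norm_deriv_le_of_lipschitz hf)

theorem LipschitzWith.norm_sub_le_integral_norm_deriv (hf : LipschitzWith K f) (hab : a ≤ b) :
    ‖f b - f a‖ ≤ ∫ t in a..b, ‖deriv f t‖ := by
  obtain ⟨g, hg, hgf⟩ := exists_dual_vector'' ℝ (f b - f a)
  have hgderiv : ∀ᵐ t, deriv (g ∘ f) t = g (deriv f t) := by
    filter_upwards [hf.ae_differentiableAt] with t ht
    exact (g.hasFDerivAt.comp_hasDerivAt t ht.hasDerivAt).deriv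
  have hac : AbsolutelyContinuousOnInterval (g ∘ f) a b :=
    (g.lipschitz.comp hf).lipschitzOnWith.absolutelyContinuousOnInterval
  calc ‖f b - f a‖ = ∫ t in a..b, deriv (g ∘ f) t := by
        rw [hac.integral_deriv_eq_sub, Function.comp_apply, Function.comp_apply, ← map_sub, hgf]
        rfl
    _ = ∫ t in a..b, g (deriv f t) :=
        intervalIntegral.integral_congr_ae (hgderiv.mono fun t ht _ => ht)
    _ ≤ ∫ t in a..b, ‖deriv f t‖ := by
        refine intervalIntegral.integral_mono_on hab ?_ (hf.intervalIntegrable_norm_deriv a b)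
          fun t _ => ?_
        · exact hac.intervalIntegrable_deriv.congr_ae (ae_restrict_of_ae hgderiv)
        · exact (Real.le_norm_self _).trans ((g.le_of_opNorm_le hg _).trans_eq (one_mul _))

theorem LipschitzWith.eVariationOn_Icc_le_integral_norm_deriv (hf : LipschitzWith K f) :
    eVariationOn f (Icc a b) ≤ ENNReal.ofReal (∫ t in a..b, ‖deriv f t‖) := by
  refine iSup_le fun ⟨n, u, hu, hmem⟩ => ?_
  calc ∑ i ∈ Finset.range n, edist (f (u (i + 1))) (f (u i))
      = ENNReal.ofReal (∑ i ∈ Finset.range n, ‖f (u (i + 1)) - f (u i)‖) := by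
        rw [ENNReal.ofReal_sum_of_nonneg fun _ _ => norm_nonneg _]
        simp only [edist_dist, dist_eq_norm]
    _ ≤ ENNReal.ofReal (∑ i ∈ Finset.range n, ∫ t in u i..u (i + 1), ‖deriv f t‖) :=
        ENNReal.ofReal_le_ofReal <| Finset.sum_le_sum fun i _ =>
          hf.norm_sub_le_integral_norm_deriv (hu i.le_succ)
    _ = ENNReal.ofReal (∫ t in u 0..u n, ‖deriv f t‖) := by
        rw [intervalIntegral.sum_integral_adjacent_intervals fun i _ =>
          hf.intervalIntegrable_norm_deriv _ _]
    _ ≤ ENNReal.ofReal (∫ t in a..b, ‖deriv f t‖) :=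
        ENNReal.ofReal_le_ofReal <| intervalIntegral.integral_mono_interval (hmem 0).1
          (hu n.zero_le) (hmem n).2 (ae_of_all _ fun _ => norm_nonneg _)
          (hf.intervalIntegrable_norm_deriv a b)

theorem LipschitzWith.ae_norm_deriv_eq_of_le_eVariationOn (hf : LipschitzWith K f) (hab : a ≤ b)
    (hvar : ENNReal.ofReal (K * (b - a)) ≤ eVariationOn f (Icc a b)) :
    ∀ᵐ t ∂volume.restrict (Icc a b), ‖deriv f t‖ = K := by
  have hle : ∀ t, ‖deriv f t‖ ≤ K := fun _ => norm_deriv_le_of_lipschitz hf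
  have hint : K * (b - a) ≤ ∫ t in a..b, ‖deriv f t‖ :=
    (ENNReal.ofReal_le_ofReal_iff (intervalIntegral.integral_nonneg hab fun _ _ => norm_nonneg _)).mp
      (hvar.trans hf.eVariationOn_Icc_le_integral_norm_deriv)
  rw [intervalIntegral.integral_of_le hab] at hint
  have hnorm_int : IntegrableOn (fun t => ‖deriv f t‖) (Ioc a b) :=
    (hf.intervalIntegrable_norm_deriv a b).1
  have hconst_int : IntegrableOn (fun _ => (K : ℝ)) (Ioc a b) :=
    integrableOn_const measure_Ioc_lt_top.ne
  rw [Measure.restrict_congr_set Ioc_ae_eq_Icc.symm]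
  refine (integral_eq_iff_of_ae_le hnorm_int hconst_int (ae_of_all _ hle)).mp
    ((integral_mono hnorm_int hconst_int hle).antisymm ?_)
  rwa [setIntegral_const, Real.volume_real_Ioc_of_le hab, smul_eq_mul, mul_comm]

theorem HasConstantSpeedOnWith.ae_differentiableWithinAt_and_norm_derivWithin_eq
    {l : ℝ≥0} (h : HasConstantSpeedOnWith f (Icc a b) l) :
    ∀ᵐ t ∂volume.restrict (Icc a b),
      DifferentiableWithinAt ℝ f (Icc a b) t ∧ ‖derivWithin f (Icc a b) t‖ = l := by
  rcases lt_or_ge b a with hba | hab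
  · simp [Icc_eq_empty_of_lt hba]
  set g : ℝ → E := fun t => f (projIcc a b hab t)
  have hg : LipschitzWith l g := by
    have := h.lipschitzOnWith.to_restrict.comp (LipschitzWith.projIcc hab)
    rwa [mul_one] at this
  have hfg : EqOn f g (Icc a b) := fun t ht => by simp [g, projIcc_of_mem hab ht]
  have hvar : eVariationOn g (Icc a b) = ENNReal.ofReal (l * (b - a)) := by
    rw [← eVariationOn.eq_of_eqOn hfg, ← h (left_mem_Icc.2 hab) (right_mem_Icc.2 hab), inter_self]
  have hnorm := hg.ae_norm_deriv_eq_of_le_eVariationOn hab hvar.ge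
  rw [Measure.restrict_congr_set Ioo_ae_eq_Icc.symm] at hnorm ⊢
  filter_upwards [ae_restrict_mem measurableSet_Ioo, ae_restrict_of_ae hg.ae_differentiableAt,
    hnorm] with t ht hdiff hnorm_t
  have hnhds : Icc a b ∈ 𝓝 t := Icc_mem_nhds ht.1 ht.2
  have hfg_t : f =ᶠ[𝓝 t] g := eventually_of_mem hnhds hfg
  refine ⟨(hdiff.congr_of_eventuallyEq hfg_t).differentiableWithinAt, ?_⟩
  rw [derivWithin_of_mem_nhds hnhds, hfg_t.deriv_eq, hnorm_t]

end Lipschitz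

theorem constant_speed_lipschitz_ae_deriv_general {d : ℕ}
    (T : ℝ) (hT : 0 < T) (γ : ℝ → EuclideanSpace ℝ (Fin d))
    (hfin : pVar 1 γ 0 T ≠ ⊤)
    (hcs : ∀ t ∈ Icc (0 : ℝ) T,
      pVar 1 γ 0 t = ENNReal.ofReal (t / T) * pVar 1 γ 0 T) :
    (∃ K : ℝ≥0, LipschitzOnWith K γ (Icc 0 T)) ∧
    (∀ᵐ t ∂(volume.restrict (Icc (0 : ℝ) T)),
      DifferentiableWithinAt ℝ γ (Icc 0 T) t ∧
      ‖derivWithin γ (Icc 0 T) t‖ = (pVar 1 γ 0 T).toReal / T) := by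
  set l : ℝ≥0 := ⟨(pVar 1 γ 0 T).toReal / T, by positivity⟩
  have hspeed : HasConstantSpeedOnWith γ (Icc 0 T) l := by
    refine hasConstantSpeedOnWith_Icc_of_eVariationOn_Icc_left fun t ht => ?_
    rw [← pVar_one_eq_eVariationOn, hcs t ht, ← ENNReal.ofReal_toReal hfin,
      ← ENNReal.ofReal_mul (by have := ht.1; positivity)]
    congr 1
    change t / T * _ = _ / T * (t - 0)
    ring
  exact ⟨⟨l, hspeed.lipschitzOnWith⟩, hspeed.ae_differentiableWithinAt_and_norm_derivWithin_eq⟩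

/-- a continuous path `γ : [0,T] → ℝ^d` of finite `1`-variation, parameterised
at constant speed (`‖γ‖_{1-var;[0,t]} = (t/T)·‖γ‖_{1-var;[0,T]}`), is Lipschitz on `[0,T]`,
differentiable at almost every `t ∈ [0,T]`, with `‖γ′(t)‖ = ‖γ‖_{1-var;[0,T]}/T` a.e. -/
theorem constant_speed_lipschitz_ae_deriv {d : ℕ}
    (T : ℝ) (hT : 0 < T) (γ : ℝ → EuclideanSpace ℝ (Fin d))
    (hcont : ContinuousOn γ (Icc 0 T)) (hfin : pVar 1 γ 0 T ≠ ⊤)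
    (hcs : ∀ t ∈ Icc (0 : ℝ) T,
      pVar 1 γ 0 t = ENNReal.ofReal (t / T) * pVar 1 γ 0 T) :
    (∃ K : ℝ≥0, LipschitzOnWith K γ (Icc 0 T)) ∧
    (∀ᵐ t ∂(volume.restrict (Icc (0 : ℝ) T)),
      DifferentiableWithinAt ℝ γ (Icc 0 T) t ∧
      ‖derivWithin γ (Icc 0 T) t‖ = (pVar 1 γ 0 T).toReal / T) :=
  constant_speed_lipschitz_ae_deriv_general T hT γ hfin hcs
end
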